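/- Let n ≥ 1, let A be a symmetric n×n real matrix, ω a skew-symmetric n×n real matrix, d, N ∈ ℝⁿ, and let μ₁, μ₂, μ₃, μ₅, μ₆ be real numbers satisfying Parodi's relation μ₂ + μ₃ = μ₆ − μ₅ and such that λ₁ := μ₂ − μ₃ ≠ 0. Set λ₂ := μ₅ − μ₆, ρ := λ₁N + λ₂(Ad), and σ := μ₁(dᵀAd)(d⊗d) + μ₂(N⊗d) + μ₃(d⊗N) + μ₅((Ad)⊗d) + μ₆(d⊗(Ad)). Then ⟨σ, A+ω⟩_F − ⟨ωd, ρ⟩ + (λ₂/λ₁)⟨Ad, ρ⟩ = μ₁(dᵀAd)² + (μ₅ + μ₆ + λ₂²/λ₁)|Ad|². Consequently, if in addition λ₁ < 0, μ₁ ≥ 0 and λ₂²/(−λ₁) ≤ μ₅ + μ₆, this quantity is nonnegative. -/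

import Mathlib

/-!
Write `a = A d` and `w = ω d`. The Frobenius pairing of a dyad `u ⊗ v` with `A + ω` is
`u ⬝ (A + ω) v`; symmetry of `A` and skew-symmetry of `ω` (in particular `d ⬝ ω d = 0`) turn
`⟨σ, A + ω⟩` into `μ₁ (d ⬝ a)² + (μ₂ + μ₃) (a ⬝ N) + λ₁ (w ⬝ N) + (μ₅ + μ₆) |a|² + λ₂ (w ⬝ a)`.
The `w`-terms are cancelled by `⟨w, ρ⟩`, and `(λ₂ / λ₁) ⟨a, ρ⟩` contributes
`λ₂ (a ⬝ N) + (λ₂² / λ₁) |a|²`, whose cross term cancels `(μ₂ + μ₃) (a ⬝ N)` by Parodi's relation.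
-/

open Matrix BigOperators

namespace Matrix

variable {ι R : Type*} [Fintype ι]

theorem sum_sum_vecMulVec_mul [CommSemiring R] (u v : ι → R) (M : Matrix ι ι R) :
    ∑ i, ∑ j, vecMulVec u v i j * M i j = u ⬝ᵥ M *ᵥ v := by
  simp only [dotProduct, mulVec, vecMulVec_apply, Finset.mul_sum]
  exact Finset.sum_congr rfl fun i _ => Finset.sum_congr rfl fun j _ => by ring

theorem dotProduct_mulVec_of_transpose_eq_self [CommSemiring R] {A : Matrix ι ι R}
    (hA : Aᵀ = A) (x y : ι → R) : x ⬝ᵥ A *ᵥ y = A *ᵥ x ⬝ᵥ y := by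
  rw [dotProduct_mulVec, ← hA, vecMul_transpose, hA]

theorem dotProduct_mulVec_of_transpose_eq_neg [CommRing R] {ω : Matrix ι ι R}
    (hω : ωᵀ = -ω) (x y : ι → R) : x ⬝ᵥ ω *ᵥ y = -(ω *ᵥ x ⬝ᵥ y) := by
  rw [dotProduct_mulVec, ← mulVec_transpose, hω, neg_mulVec, neg_dotProduct]

theorem dotProduct_mulVec_self_of_transpose_eq_neg [CommRing R] [NoZeroDivisors R]
    [CharZero R] {ω : Matrix ι ι R} (hω : ωᵀ = -ω) (x : ι → R) : x ⬝ᵥ ω *ᵥ x = 0 := by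
  rw [← CharZero.eq_neg_self_iff]
  conv_rhs => rw [dotProduct_comm]
  exact dotProduct_mulVec_of_transpose_eq_neg hω x x

end Matrix

theorem sum_sum_leslieStress_mul {ι R : Type*} [Fintype ι] [CommSemiring R]
    (M : Matrix ι ι R) (d N a : ι → R) (c μ₂ μ₃ μ₅ μ₆ : R) :
    ∑ i, ∑ j, (c • vecMulVec d d + μ₂ • vecMulVec N d
        + μ₃ • vecMulVec d N + μ₅ • vecMulVec a d
        + μ₆ • vecMulVec d a) i j * M i j =
      c * (d ⬝ᵥ M *ᵥ d) + μ₂ * (N ⬝ᵥ M *ᵥ d) + μ₃ * (d ⬝ᵥ M *ᵥ N) + μ₅ * (a ⬝ᵥ M *ᵥ d)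
        + μ₆ * (d ⬝ᵥ M *ᵥ a) := by
  simp only [Matrix.add_apply, Matrix.smul_apply, smul_eq_mul, add_mul, mul_assoc,
    Finset.sum_add_distrib, ← Finset.mul_sum, sum_sum_vecMulVec_mul]

theorem leslie_dissipation_eq_of_parodi {ι R : Type*} [Fintype ι] [Field R] [CharZero R]
    {A ω : Matrix ι ι R} (hA : Aᵀ = A) (hω : ωᵀ = -ω)
    (d N : ι → R) {μ₁ μ₂ μ₃ μ₅ μ₆ lam₁ lam₂ : R}
    (hlam₁ : lam₁ = μ₂ - μ₃) (hlam₂ : lam₂ = μ₅ - μ₆)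
    (hParodi : μ₂ + μ₃ = μ₆ - μ₅) (hlam₁ne : lam₁ ≠ 0) :
    ((∑ i, ∑ j,
      ((μ₁ * (d ⬝ᵥ A *ᵥ d)) • vecMulVec d d + μ₂ • vecMulVec N d
        + μ₃ • vecMulVec d N + μ₅ • vecMulVec (A *ᵥ d) d
        + μ₆ • vecMulVec d (A *ᵥ d)) i j * (A + ω) i j)
      - ω *ᵥ d ⬝ᵥ (lam₁ • N + lam₂ • A *ᵥ d)
      + (lam₂ / lam₁) * (A *ᵥ d ⬝ᵥ (lam₁ • N + lam₂ • A *ᵥ d))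
      = μ₁ * (d ⬝ᵥ A *ᵥ d) ^ 2
        + (μ₅ + μ₆ + lam₂ ^ 2 / lam₁) * (A *ᵥ d ⬝ᵥ A *ᵥ d)) := by
  have hd : d ⬝ᵥ ω *ᵥ d = 0 := dotProduct_mulVec_self_of_transpose_eq_neg hω d
  have hdAN := dotProduct_mulVec_of_transpose_eq_self hA d N
  have hdAa := dotProduct_mulVec_of_transpose_eq_self hA d (A *ᵥ d)
  have hdωN := dotProduct_mulVec_of_transpose_eq_neg hω d N
  have hdωa := dotProduct_mulVec_of_transpose_eq_neg hω d (A *ᵥ d)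
  have hρ : lam₂ / lam₁ * (lam₁ * (A *ᵥ d ⬝ᵥ N) + lam₂ * (A *ᵥ d ⬝ᵥ A *ᵥ d))
      = lam₂ * (A *ᵥ d ⬝ᵥ N) + lam₂ ^ 2 / lam₁ * (A *ᵥ d ⬝ᵥ A *ᵥ d) := by
    field_simp
  rw [sum_sum_leslieStress_mul]
  simp only [add_mulVec, dotProduct_add, dotProduct_smul, smul_eq_mul, hd, hdAN, hdAa, hdωN,
    hdωa, hρ]
  rw [dotProduct_comm N, dotProduct_comm N, dotProduct_comm (A *ᵥ d) (ω *ᵥ d)]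
  linear_combination (A *ᵥ d ⬝ᵥ N) * (hParodi + hlam₂) - (ω *ᵥ d ⬝ᵥ N) * hlam₁
    - (ω *ᵥ d ⬝ᵥ A *ᵥ d) * hlam₂

theorem leslie_dissipation_parodi_general
    (n : ℕ)
    (A ω : Matrix (Fin n) (Fin n) ℝ)
    (hA : Aᵀ = A) (hω : ωᵀ = -ω)
    (d N : Fin n → ℝ) (μ₁ μ₂ μ₃ μ₅ μ₆ lam₁ lam₂ : ℝ)
    (hlam₁ : lam₁ = μ₂ - μ₃) (hlam₂ : lam₂ = μ₅ - μ₆)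
    (hParodi : μ₂ + μ₃ = μ₆ - μ₅) (hlam₁ne : lam₁ ≠ 0) :
    ((∑ i, ∑ j,
      ((μ₁ * (d ⬝ᵥ A.mulVec d)) • vecMulVec d d + μ₂ • vecMulVec N d
        + μ₃ • vecMulVec d N + μ₅ • vecMulVec (A.mulVec d) d
        + μ₆ • vecMulVec d (A.mulVec d)) i j * (A + ω) i j)
      - ω.mulVec d ⬝ᵥ (lam₁ • N + lam₂ • A.mulVec d)
      + (lam₂ / lam₁) * (A.mulVec d ⬝ᵥ (lam₁ • N + lam₂ • A.mulVec d))
      = μ₁ * (d ⬝ᵥ A.mulVec d) ^ 2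
        + (μ₅ + μ₆ + lam₂ ^ 2 / lam₁) * (A.mulVec d ⬝ᵥ A.mulVec d))
    ∧ (lam₁ < 0 → 0 ≤ μ₁ → lam₂ ^ 2 / (-lam₁) ≤ μ₅ + μ₆ →
        0 ≤ μ₁ * (d ⬝ᵥ A.mulVec d) ^ 2
          + (μ₅ + μ₆ + lam₂ ^ 2 / lam₁) * (A.mulVec d ⬝ᵥ A.mulVec d)) := by
  refine ⟨leslie_dissipation_eq_of_parodi hA hω d N hlam₁ hlam₂ hParodi hlam₁ne,
    fun _ hμ₁ hcoeff => ?_⟩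
  have hc : 0 ≤ μ₅ + μ₆ + lam₂ ^ 2 / lam₁ := by
    rw [div_neg] at hcoeff
    linarith
  have ha : 0 ≤ A *ᵥ d ⬝ᵥ A *ᵥ d := Finset.sum_nonneg fun i _ => mul_self_nonneg _
  exact add_nonneg (mul_nonneg hμ₁ (sq_nonneg _)) (mul_nonneg hc ha)

/-- Pointwise content of the energy identity (en-case1) in Case 1 (with
Parodi's relation) for the regularized Ericksen–Leslie system, together with
the nonnegativity of the Leslie dissipation under the coefficient
conditions. -/
theorem leslie_dissipation_parodi
    (n : ℕ) (hn : 1 ≤ n)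
    (A ω : Matrix (Fin n) (Fin n) ℝ)
    (hA : Aᵀ = A) (hω : ωᵀ = -ω)
    (d N : Fin n → ℝ) (μ₁ μ₂ μ₃ μ₅ μ₆ lam₁ lam₂ : ℝ)
    (hlam₁ : lam₁ = μ₂ - μ₃) (hlam₂ : lam₂ = μ₅ - μ₆)
    (hParodi : μ₂ + μ₃ = μ₆ - μ₅) (hlam₁ne : lam₁ ≠ 0) :
    ((∑ i, ∑ j,
      ((μ₁ * (d ⬝ᵥ A.mulVec d)) • vecMulVec d d + μ₂ • vecMulVec N d
        + μ₃ • vecMulVec d N + μ₅ • vecMulVec (A.mulVec d) d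
        + μ₆ • vecMulVec d (A.mulVec d)) i j * (A + ω) i j)
      - ω.mulVec d ⬝ᵥ (lam₁ • N + lam₂ • A.mulVec d)
      + (lam₂ / lam₁) * (A.mulVec d ⬝ᵥ (lam₁ • N + lam₂ • A.mulVec d))
      = μ₁ * (d ⬝ᵥ A.mulVec d) ^ 2
        + (μ₅ + μ₆ + lam₂ ^ 2 / lam₁) * (A.mulVec d ⬝ᵥ A.mulVec d))
    ∧ (lam₁ < 0 → 0 ≤ μ₁ → lam₂ ^ 2 / (-lam₁) ≤ μ₅ + μ₆ →
        0 ≤ μ₁ * (d ⬝ᵥ A.mulVec d) ^ 2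
          + (μ₅ + μ₆ + lam₂ ^ 2 / lam₁) * (A.mulVec d ⬝ᵥ A.mulVec d)) :=
  leslie_dissipation_parodi_general n A ω hA hω d N μ₁ μ₂ μ₃ μ₅ μ₆ lam₁ lam₂ hlam₁ hlam₂ hParodi
    hlam₁ne
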